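/- arXiv:1412.8595 — 8 statements merged into one kernel-verified Lean document; each statement's English description precedes it below -/
import Mathlib

section
/- If f : A^n → B satisfies f = f* ∘ ofo restricted to A^n for some f* : A^♯ → B, then for every two-element subset I of {1,...,n}, the identification minor f_I : A^{n-1} → B equals f* ∘ ofo restricted to A^{n-1}. In particular, all identification minors of f are equal, so f has a unique identification minor. -/
/-! Identifying the coordinates `i < j` of a tuple inserts a second copy of `aᵢ` at position `j`.
Since `aᵢ` already occurs before position `j`, the inserted entry is not a first occurrence, so
`ofo` does not see it. -/

/-- `ofo l` lists the distinct elements of `l` in order of first occurrence. -/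
def ofo {A : Type*} [DecidableEq A] (l : List A) : List A :=
  l.reverse.dedup.reverse

/-- The order-of-first-occurrence list of a tuple. -/
def ofoFun {A : Type*} [DecidableEq A] {n : ℕ} (a : Fin n → A) : List A :=
  ofo (List.ofFn a)

/-- `delta i j hij : [n+1] → [n]` is the map δ_I for I = {i,j}, i < j (0-indexed). -/
def delta {n : ℕ} (i j : Fin (n + 1)) (hij : i < j) : Fin (n + 1) → Fin n := fun t =>
  if h : (t : ℕ) < (j : ℕ) then
    ⟨t, lt_of_lt_of_le h (Nat.lt_succ_iff.mp j.isLt)⟩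
  else if h2 : (t : ℕ) = (j : ℕ) then
    ⟨i, lt_of_lt_of_le (Fin.lt_def.mp hij) (Nat.lt_succ_iff.mp j.isLt)⟩
  else ⟨(t : ℕ) - 1, by have := t.isLt; omega⟩

theorem ofo_append_cons_of_mem {A : Type*} [DecidableEq A] {x : A} {u : List A} (v : List A)
    (hx : x ∈ u) : ofo (u ++ x :: v) = ofo (u ++ v) := by
  simp only [ofo, List.reverse_append, List.reverse_cons, List.append_assoc, List.singleton_append,
    List.dedup_append, List.dedup_cons_of_mem (List.mem_reverse.mpr hx)]

theorem ofFn_comp_delta {A : Type*} {n : ℕ} {i j : Fin (n + 1)} (hij : i < j) (a : Fin n → A) :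
    List.ofFn (a ∘ delta i j hij) =
      (List.ofFn a).take j ++ a (i.castLT (hij.trans_le j.le_last)) :: (List.ofFn a).drop j := by
  have hj : (j : ℕ) ≤ n := Nat.lt_succ_iff.mp j.isLt
  apply List.ext_getElem
  · simp only [List.length_ofFn, List.length_append, List.length_take, List.length_cons,
      List.length_drop]
    omega
  · intro t h₁ h₂
    simp only [List.getElem_ofFn, Function.comp_apply, delta, List.getElem_append, List.getElem_cons,
      List.length_take, List.length_ofFn, List.getElem_take, List.getElem_drop]
    split_ifs <;> first | omega | congr 1 <;> ext <;> simp <;> omega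

theorem ofoFun_comp_delta {A : Type*} [DecidableEq A] {n : ℕ} {i j : Fin (n + 1)} (hij : i < j)
    (a : Fin n → A) : ofoFun (a ∘ delta i j hij) = ofoFun a := by
  have hi : (i : ℕ) < ((List.ofFn a).take j).length := by
    simpa [Nat.lt_succ_iff.mp j.isLt] using hij
  have hmem : a (i.castLT (hij.trans_le j.le_last)) ∈ (List.ofFn a).take j := by
    simpa [Fin.castLT] using List.getElem_mem hi
  rw [ofoFun, ofFn_comp_delta, ofo_append_cons_of_mem _ hmem, List.take_append_drop, ofoFun]

/-- If f = f* ∘ ofo on A^n, then every identification minor f_I equals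
f* ∘ ofo on A^{n-1}; in particular all identification minors of f are equal. -/
theorem ofo_determined_unique_identification_minor {A B : Type*} [DecidableEq A] {n : ℕ}
    (f : (Fin (n + 1) → A) → B) (fstar : List A → B)
    (hf : ∀ b : Fin (n + 1) → A, f b = fstar (ofoFun b)) :
    (∀ (i j : Fin (n + 1)) (hij : i < j) (a : Fin n → A),
      f (a ∘ delta i j hij) = fstar (ofoFun a)) ∧
    (∀ (i j : Fin (n + 1)) (hij : i < j) (k l : Fin (n + 1)) (hkl : k < l)
      (a : Fin n → A), f (a ∘ delta i j hij) = f (a ∘ delta k l hkl)) := by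
  have minor_eq : ∀ (i j : Fin (n + 1)) (hij : i < j) (a : Fin n → A),
      f (a ∘ delta i j hij) = fstar (ofoFun a) := fun i j hij a => by
    rw [hf, ofoFun_comp_delta]
  exact ⟨minor_eq, fun i j hij k l hkl a => by rw [minor_eq i j hij a, minor_eq k l hkl a]⟩
end

section
/- For every permutation σ of {1,...,n} and every two-element subset I of {1,...,n}, there exists a permutation σ̂ of {1,...,n-1} such that σ̂ ∘ δ_{σ^{-1}(I)} = δ_I ∘ σ and σ̂(min σ^{-1}(I)) = min I. -/
theorem Function.Surjective.exists_equiv_comp_eq_of_ker_eq {α β γ : Type*} {f : α → β}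
    {g : α → γ} (hf : f.Surjective) (hg : g.Surjective) (h : ∀ a b, f a = f b ↔ g a = g b) :
    ∃ e : β ≃ γ, ∀ a, e (f a) = g a :=
  ⟨(Setoid.quotientKerEquivOfSurjective f hf).symm.trans <|
      (Quotient.congrRight h).trans (Setoid.quotientKerEquivOfSurjective g hg),
    fun a => by
      have hq : (Setoid.quotientKerEquivOfSurjective f hf).symm (f a) = Quotient.mk _ a :=
        ((Setoid.quotientKerEquivOfSurjective f hf).symm_apply_eq (x := f a)).mpr rfl
      rw [Equiv.trans_apply, Equiv.trans_apply, hq]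
      rfl⟩

section Delta

variable {n : ℕ} (i j : Fin (n + 1)) (hij : i < j)

theorem delta_surjective : (delta i j hij).Surjective := by
  intro x
  by_cases hx : (x : ℕ) < j
  · exact ⟨x.castSucc, by simp [delta, hx]⟩
  · refine ⟨x.succ, Fin.ext ?_⟩
    simp only [delta, Fin.val_succ]
    split_ifs <;> simp <;> omega

theorem delta_eq_delta_iff {a b : Fin (n + 1)} :
    delta i j hij a = delta i j hij b ↔ a = b ∨ s(a, b) = s(i, j) := by
  have : (i : ℕ) < j := hij
  simp only [delta, Fin.ext_iff, Sym2.eq_iff]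
  split_ifs <;> simp <;> omega

end Delta

/-- For every permutation σ of the index set and every 2-element subset
I = {i,j} (i < j), writing σ⁻¹(I) = {k,l} with k < l, there is a permutation σ̂ of
the smaller index set with σ̂ ∘ δ_{σ⁻¹(I)} = δ_I ∘ σ and σ̂(min σ⁻¹(I)) = min I. -/
theorem exists_hat_sigma {n : ℕ} (σ : Equiv.Perm (Fin (n + 1)))
    (i j : Fin (n + 1)) (hij : i < j) (k l : Fin (n + 1)) (hkl : k < l)
    (hI : (σ⁻¹ i = k ∧ σ⁻¹ j = l) ∨ (σ⁻¹ i = l ∧ σ⁻¹ j = k)) :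
    ∃ σhat : Equiv.Perm (Fin n),
      (∀ t : Fin (n + 1), σhat (delta k l hkl t) = delta i j hij (σ t)) ∧
      σhat (delta k l hkl k) = delta i j hij i := by
  have hpair : s(i, j) = s(σ k, σ l) := by
    rcases hI with ⟨rfl, rfl⟩ | ⟨rfl, rfl⟩ <;> simp [Sym2.eq_swap]
  have hker : ∀ a b, delta k l hkl a = delta k l hkl b ↔
      delta i j hij (σ a) = delta i j hij (σ b) := by
    intro a b
    rw [delta_eq_delta_iff, delta_eq_delta_iff, σ.injective.eq_iff, hpair,
      ← Sym2.map_mk, ← Sym2.map_mk, (Sym2.map.injective σ.injective).eq_iff]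
  obtain ⟨σhat, hσhat⟩ := (delta_surjective k l hkl).exists_equiv_comp_eq_of_ker_eq
    ((delta_surjective i j hij).comp σ.surjective) hker
  refine ⟨σhat, hσhat, ?_⟩
  rw [hσhat, Function.comp_apply, delta_eq_delta_iff]
  rcases hI with ⟨rfl, rfl⟩ | ⟨rfl, rfl⟩ <;> simp
end

section
/- Let n > |A| + 1 and f : A^n → B. If f is totally symmetric and determined by the order of first occurrence, then f is determined by supp: there is a map f'' : P(A) → B such that f(a) = f''({a_1,...,a_n}) for all a ∈ A^n. -/
open List in
theorem exists_perm_comp_eq_of_perm_ofFn {α : Type*} {n : ℕ} {a b : Fin n → α}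
    (h : ofFn a ~ ofFn b) : ∃ σ : Equiv.Perm (Fin n), a ∘ σ = b := by
  let _ : LinearOrder α := IsWellOrder.linearOrder WellOrderingRel
  have hsorted : a ∘ Tuple.sort a = b ∘ Tuple.sort b := by
    refine ofFn_injective (Perm.eq_of_sortedLE ?_ ?_ ?_)
    · exact sortedLE_ofFn_iff.mpr (Tuple.monotone_sort a)
    · exact sortedLE_ofFn_iff.mpr (Tuple.monotone_sort b)
    · exact ((Tuple.sort a).ofFn_comp_perm a).trans
        (h.trans ((Tuple.sort b).ofFn_comp_perm b).symm)
  refine ⟨(Tuple.sort b)⁻¹.trans (Tuple.sort a), funext fun i => ?_⟩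
  simpa using congrFun hsorted ((Tuple.sort b)⁻¹ i)

section ofo

variable {A : Type*} [DecidableEq A]

theorem ofo_append_of_subset {l r : List A} (hl : l.Nodup) (hr : r ⊆ l) : ofo (l ++ r) = l := by
  rw [ofo, List.reverse_append,
    List.Subset.dedup_append_right fun x hx => List.mem_reverse.mpr (hr (List.mem_reverse.mp hx)),
    (List.nodup_reverse.mpr hl).dedup, List.reverse_reverse]

theorem exists_perm_ofo_eq {l m : List A} (hl : l.Nodup) (hlm : l ⊆ m) (hml : m ⊆ l) :
    ∃ m', m.Perm m' ∧ ofo m' = l := by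
  obtain ⟨l', hl'l, hl'm⟩ := hl.subperm hlm
  obtain ⟨r, hmr⟩ := hl'm.exists_perm_append
  have hm : m.Perm (l ++ r) := hmr.trans (hl'l.append_right r)
  refine ⟨l ++ r, hm, ofo_append_of_subset hl fun x hx => hml ?_⟩
  exact hm.symm.subset (List.mem_append_right l hx)

theorem exists_perm_ofoFun_comp_eq {n : ℕ} (a : Fin n → A) {l : List A} (hl : l.Nodup)
    (hla : ∀ x, x ∈ l ↔ x ∈ Set.range a) :
    ∃ σ : Equiv.Perm (Fin n), ofoFun (a ∘ σ) = l := by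
  have hmem : ∀ x, x ∈ l ↔ x ∈ List.ofFn a := by simpa [List.mem_ofFn] using hla
  obtain ⟨m, ham, hm⟩ :=
    exists_perm_ofo_eq hl (fun x => (hmem x).mp) (fun x => (hmem x).mpr)
  obtain rfl : m.length = n := by simpa using ham.length_eq.symm
  obtain ⟨σ, hσ⟩ := exists_perm_comp_eq_of_perm_ofFn (a := a) (b := m.get)
    (by rwa [List.ofFn_get])
  exact ⟨σ, by rw [ofoFun, hσ, List.ofFn_get, hm]⟩

end ofo

theorem totally_symmetric_ofo_determined_by_supp_general {A B : Type*} [DecidableEq A]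
    {n : ℕ}
    (f : (Fin n → A) → B)
    (hsym : ∀ (σ : Equiv.Perm (Fin n)) (a : Fin n → A), f (a ∘ σ) = f a)
    (hofo : ∃ fstar : List A → B, ∀ a : Fin n → A, f a = fstar (ofoFun a)) :
    ∃ g : Set A → B, ∀ a : Fin n → A, f a = g (Set.range a) := by
  classical
  obtain ⟨fstar, hf⟩ := hofo
  refine ⟨fun S => fstar (if hS : S.Finite then hS.toFinset.toList else []), fun a => ?_⟩
  obtain ⟨σ, hσ⟩ := exists_perm_ofoFun_comp_eq a
    (l := (Set.finite_range a).toFinset.toList) (Finset.nodup_toList _) (by simp)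
  beta_reduce
  rw [dif_pos (Set.finite_range a), ← hsym σ, hf, hσ]

/-- If n > |A| + 1 and f : A^n → B is totally symmetric and determined by
the order of first occurrence, then f is determined by supp. -/
theorem totally_symmetric_ofo_determined_by_supp {A B : Type*} [Fintype A] [DecidableEq A]
    {n : ℕ} (hn : Fintype.card A + 1 < n)
    (f : (Fin n → A) → B)
    (hsym : ∀ (σ : Equiv.Perm (Fin n)) (a : Fin n → A), f (a ∘ σ) = f a)
    (hofo : ∃ fstar : List A → B, ∀ a : Fin n → A, f a = fstar (ofoFun a)) :
    ∃ g : Set A → B, ∀ a : Fin n → A, f a = g (Set.range a) :=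
  totally_symmetric_ofo_determined_by_supp_general f hsym hofo
end

section
/- Let n > |A| + 1 and f : A^n → B. Suppose f is determined by the order of first occurrence and for all two-element subsets I, J of {1,...,n} there exists a bijection π_{IJ} of {1,...,n-1} with π_{IJ}(min J) = min I and f(aδ_I) = f(aπ_{IJ}δ_J) for all a ∈ A^{n-1}. Then f is totally symmetric. -/
/-!
Take `I = {n-1, n}` and `J = {0, 1}`. Both `δ`'s merely repeat an adjacent entry at an end
of the tuple, so they leave the order of first occurrence unchanged, and the hypothesis becomes `f* (ofo c) = f* (ofo (c ∘ π))` for a permutation `π` of `[n]`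
sending the first position to the last one.

Let `w` be a list of `m ≤ |A| < n` distinct values. Arrange the entries of `w` in the first
`m` positions of a tuple `c` so that `π` visits them in the order `w`, and fill the other
positions with some `x ∈ w`. Then `ofo c` is that arrangement whatever `x` is, while
`ofo (c ∘ π) = x :: w.erase x` because `π` reads the padding value `x` first. So
`f* (x :: w.erase x)` does not depend on `x`, and taking `x` to be the head of `w` shows that
moving any entry of `w` to the front does not change `f*`. Such moves generate all
rearrangements, and `ofo (a ∘ σ)` is a rearrangement of `ofo a`.
-/

namespace List

variable {α β γ : Type*}

lemma filter_ne_map_elim [DecidableEq β] (f : α → Option γ) (u : γ → β) (x : β) (L : List α) :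
    (L.map fun a => (f a).elim x u).filter (· ≠ x) = ((L.filterMap f).map u).filter (· ≠ x) := by
  induction L with
  | nil => rfl
  | cons a L ih =>
    cases h : f a with
    | none => rw [map_cons, filterMap_cons_none h, h, Option.elim_none,
        filter_cons_of_neg (by simp), ih]
    | some b => rw [map_cons, filterMap_cons_some h, h, Option.elim_some, map_cons,
        filter_cons, filter_cons, ih]

lemma Nodup.exists_map_eq [DecidableEq α] {Λ : List α} (hΛ : Λ.Nodup) {w : List β}
    (hlen : Λ.length = w.length) (b : β) : ∃ u : α → β, Λ.map u = w :=
  ⟨fun a => w.getD (Λ.idxOf a) b, ext_getElem (by simpa) fun k h₁ h₂ => by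
    simp [hΛ.idxOf_getElem, h₂]⟩

lemma dedup_append_singleton [DecidableEq α] (l : List α) (x : α) :
    (l ++ [x]).dedup = (l.filter (· ≠ x)).dedup ++ [x] := by
  induction l with
  | nil => simp
  | cons y l ih =>
    by_cases hy : y ∈ l ++ [x]
    · rw [cons_append, dedup_cons_of_mem hy, ih]
      by_cases hyx : y = x
      · simp [hyx]
      · have : y ∈ l.filter (· ≠ x) := by simp_all
        rw [filter_cons_of_pos (by simpa), dedup_cons_of_mem this]
    · have : y ∉ l.filter (· ≠ x) := by simp_all
      have hyx : y ≠ x := by simp_all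
      rw [cons_append, dedup_cons_of_notMem hy, ih, filter_cons_of_pos (by simpa),
        dedup_cons_of_notMem this, cons_append]

-- Move the entries of `l'` to the front one at a time, the last one first.
theorem Perm.eq_of_forall_cons_erase_eq [DecidableEq α] {g : List α → β}
    (hg : ∀ l : List α, l.Nodup → ∀ x ∈ l, g (x :: l.erase x) = g l)
    {l l' : List α} (hl : l.Nodup) (h : l'.Perm l) : g l' = g l := by
  have key : ∀ s : List α, s.Nodup → s ⊆ l → g (s ++ l.filter (· ∉ s)) = g l := by
    intro s
    induction s with
    | nil => simp
    | cons x s ih =>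
      intro hs hsl
      rw [nodup_cons] at hs
      have hF : (l.filter (· ∉ s)).Nodup := hl.filter _
      have hxF : x ∈ l.filter (· ∉ s) := by simpa [hs.1] using hsl mem_cons_self
      have hdisj : (s ++ l.filter (· ∉ s)).Nodup :=
        nodup_append.mpr ⟨hs.2, hF, fun a ha b hb => by rintro rfl; simp_all⟩
      have herase : l.filter (· ∉ x :: s) = (l.filter (· ∉ s)).erase x := by
        rw [hF.erase_eq_filter, filter_filter]
        congr 1; ext y; by_cases y = x <;> simp [*]
      rw [cons_append, herase, ← erase_append_right _ hs.1,
        hg _ hdisj x (mem_append_right _ hxF), ih hs.2 (subset_of_cons_subset hsl)]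
  have hnil : l.filter (· ∉ l') = [] := by simpa using fun y hy => h.symm.subset hy
  simpa only [hnil, append_nil] using key l' (h.nodup_iff.mpr hl) h.subset

end List

section Ofo

variable {A : Type*} [DecidableEq A]

@[simp] lemma mem_ofo {x : A} {l : List A} : x ∈ ofo l ↔ x ∈ l := by simp [ofo]

lemma nodup_ofo (l : List A) : (ofo l).Nodup := by simp [ofo, List.nodup_dedup]

lemma ofo_eq_self {l : List A} (h : l.Nodup) : ofo l = l := by
  simp [ofo, List.dedup_eq_self.mpr (List.nodup_reverse.mpr h)]

lemma ofo_append_of_subset_s9 {l₁ l₂ : List A} (h : l₂ ⊆ l₁) : ofo (l₁ ++ l₂) = ofo l₁ := by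
  suffices ∀ L : List A, L ⊆ l₁.reverse → (L ++ l₁.reverse).dedup = l₁.reverse.dedup by
    simp [ofo, this l₂.reverse (by simpa using h)]
  intro L hL
  induction L with
  | nil => rfl
  | cons y L ih =>
    rw [List.cons_append, List.dedup_cons_of_mem (by simp [hL List.mem_cons_self]),
      ih (List.subset_of_cons_subset hL)]

lemma ofo_cons (x : A) (l : List A) : ofo (x :: l) = x :: ofo (l.filter (· ≠ x)) := by
  simp [ofo, List.dedup_append_singleton, List.filter_reverse]

lemma ofo_cons_cons (x : A) (l : List A) : ofo (x :: x :: l) = ofo (x :: l) := by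
  rw [ofo_cons, ofo_cons, List.filter_cons_of_neg (by simp)]

lemma ofoFun_comp_perm {n : ℕ} (σ : Equiv.Perm (Fin n)) (a : Fin n → A) :
    (ofoFun (a ∘ σ)).Perm (ofoFun a) :=
  (List.perm_ext_iff_of_nodup (nodup_ofo _) (nodup_ofo _)).mpr fun y => by
    simpa [ofoFun] using (σ.surjective.exists (p := fun i => a i = y)).symm

end Ofo

section Delta

variable {n : ℕ} {i j : Fin (n + 1)} (hij : i < j)

lemma delta_val_of_lt {t : Fin (n + 1)} (ht : t < j) : (delta i j hij t : ℕ) = t := by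
  simp [delta, Fin.lt_def.mp ht]

lemma delta_val_self : (delta i j hij j : ℕ) = i := by
  simp [delta]

lemma delta_val_of_gt {t : Fin (n + 1)} (ht : j < t) : (delta i j hij t : ℕ) = t - 1 := by
  have := Fin.lt_def.mp ht
  simp [delta, show ¬ (t : ℕ) < j by omega, show (t : ℕ) ≠ j by omega]

end Delta

section DeltaOfo

variable {A : Type*} [DecidableEq A]

lemma ofoFun_comp_delta_last {n : ℕ} (i : Fin (n + 1)) (hi : i < Fin.last n) (a : Fin n → A) :
    ofoFun (a ∘ delta i (Fin.last n) hi) = ofoFun a := by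
  have hcast : (fun t : Fin n => a (delta i (Fin.last n) hi t.castSucc)) = a := by
    ext t; congr; ext; exact delta_val_of_lt hi (Fin.castSucc_lt_last t)
  rw [ofoFun, List.ofFn_succ', List.concat_eq_append]
  simp only [Function.comp_apply, hcast]
  exact ofo_append_of_subset_s9 (by simp)

lemma ofoFun_comp_delta_zero_one {k : ℕ} (h : (0 : Fin (k + 2)) < 1) (a : Fin (k + 1) → A) :
    ofoFun (a ∘ delta 0 1 h) = ofoFun a := by
  have hsucc : (fun t : Fin (k + 1) => a (delta 0 1 h t.succ)) = a := by
    ext t; congr; ext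
    rcases Fin.eq_zero_or_eq_succ t with rfl | ⟨t, rfl⟩
    · exact delta_val_self h
    · simp [delta_val_of_gt h (Fin.succ_lt_succ_iff.mpr (Fin.succ_pos t))]
  have hzero : delta 0 1 h 0 = 0 := Fin.ext (delta_val_of_lt h h)
  rw [ofoFun, List.ofFn_succ]
  simp only [Function.comp_apply, hsucc, hzero]
  rw [List.ofFn_succ, ofo_cons_cons, ← List.ofFn_succ, ofoFun]

end DeltaOfo

section Padding

def Fin.castLT? {n : ℕ} (m : ℕ) (i : Fin n) : Option (Fin m) :=
  if h : (i : ℕ) < m then some ⟨i, h⟩ else none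

lemma Fin.castLT?_eq_some {n m : ℕ} {i : Fin n} {j : Fin m} :
    i.castLT? m = some j ↔ (i : ℕ) = j := by
  unfold Fin.castLT?
  split_ifs with h
  · simp [Fin.ext_iff, eq_comm]
  · simp only [false_iff]; omega

variable {n : ℕ}

def visitOrder (π : Equiv.Perm (Fin n)) (m : ℕ) : List (Fin m) :=
  (List.ofFn π).filterMap (Fin.castLT? m)

lemma nodup_visitOrder (π : Equiv.Perm (Fin n)) (m : ℕ) : (visitOrder π m).Nodup := by
  refine (List.nodup_ofFn.mpr π.injective).filterMap fun a a' b ha ha' => ?_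
  simp only [Option.mem_def, Fin.castLT?_eq_some] at ha ha'
  exact Fin.ext (ha.trans ha'.symm)

lemma visitOrder_perm_finRange (π : Equiv.Perm (Fin n)) {m : ℕ} (hm : m ≤ n) :
    (visitOrder π m).Perm (List.finRange m) := by
  refine (List.perm_ext_iff_of_nodup (nodup_visitOrder π m) (List.nodup_finRange m)).mpr
    fun j => ⟨fun _ => List.mem_finRange j, fun _ => ?_⟩
  simp only [visitOrder, List.mem_filterMap, List.mem_ofFn, Fin.castLT?_eq_some]
  exact ⟨⟨j, by omega⟩, ⟨π.symm _, π.apply_symm_apply _⟩, rfl⟩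

variable {A : Type*} {m : ℕ}

def padWith (u : Fin m → A) (x : A) : Fin n → A := fun t => (t.castLT? m).elim x u

lemma ofFn_padWith (hm : m ≤ n) (u : Fin m → A) (x : A) :
    List.ofFn (padWith u x : Fin n → A) = List.ofFn u ++ List.replicate (n - m) x := by
  refine List.ext_getElem (by simp; omega) fun t h _ => ?_
  simp only [List.getElem_ofFn, padWith, Fin.castLT?]
  split_ifs with ht
  · simp [ht]
  · rw [List.getElem_append_right (by simp; omega)]
    simp

variable [DecidableEq A]

lemma ofoFun_padWith (hm : m ≤ n) {u : Fin m → A} (hu : u.Injective) {x : A}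
    (hx : x ∈ Set.range u) : ofoFun (padWith u x : Fin n → A) = List.ofFn u := by
  rw [ofoFun, ofFn_padWith hm, ofo_append_of_subset_s9, ofo_eq_self (List.nodup_ofFn.mpr hu)]
  intro y hy
  rw [List.eq_of_mem_replicate hy]
  exact List.mem_ofFn.mpr hx

lemma ofoFun_padWith_comp {k : ℕ} (hm : m ≤ k) {u : Fin m → A} (hu : u.Injective) (x : A)
    (π : Equiv.Perm (Fin (k + 1))) (hπ : π 0 = Fin.last k) :
    ofoFun (padWith u x ∘ π) = x :: ((visitOrder π m).map u).erase x := by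
  have hhead : padWith u x (π 0) = x := by
    simp [hπ, padWith, Fin.castLT?, show ¬ k < m by omega]
  have hnodup : ((visitOrder π m).map u).Nodup := (nodup_visitOrder π m).map hu
  obtain ⟨rest, hrest⟩ : ∃ rest, (List.ofFn π).map (padWith u x) = x :: rest :=
    ⟨_, by rw [List.ofFn_succ, List.map_cons, hhead]⟩
  have hfilter : rest.filter (· ≠ x) = ((visitOrder π m).map u).filter (· ≠ x) := by
    rw [visitOrder, ← List.filter_ne_map_elim,
      ← List.filter_cons_of_neg (p := (· ≠ x)) (a := x) (by simp)]
    exact congrArg _ hrest.symm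
  rw [ofoFun, ← List.map_ofFn, hrest, ofo_cons, hfilter, ofo_eq_self (hnodup.filter _),
    hnodup.erase_eq_filter]
  congr 2; ext y; by_cases y = x <;> simp [*]

theorem cons_erase_eq_of_ofoFun_comp_eq {B : Type*} {k : ℕ} {g : List A → B}
    (π : Equiv.Perm (Fin (k + 1))) (hπ : π 0 = Fin.last k)
    (hg : ∀ c : Fin (k + 1) → A, g (ofoFun (c ∘ π)) = g (ofoFun c))
    {w : List A} (hw : w.Nodup) (hlen : w.length ≤ k) {x : A} (hx : x ∈ w) :
    g (x :: w.erase x) = g w := by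
  obtain ⟨m, hm⟩ : ∃ m, w.length = m := ⟨_, rfl⟩
  have hΛ := visitOrder_perm_finRange π (show m ≤ k + 1 by omega)
  obtain ⟨u, hu⟩ := (nodup_visitOrder π m).exists_map_eq (w := w) (by simp [hΛ.length_eq, hm]) x
  have hinj : u.Injective := fun a b h =>
    List.inj_on_of_nodup_map (hu ▸ hw) (hΛ.mem_iff.mpr (List.mem_finRange a))
      (hΛ.mem_iff.mpr (List.mem_finRange b)) h
  have key : ∀ y ∈ w, g (y :: w.erase y) = g (List.ofFn u) := by
    intro y hy
    obtain ⟨j, -, rfl⟩ := List.mem_map.mp (hu ▸ hy)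
    rw [← hu, ← ofoFun_padWith_comp (by omega) hinj _ π hπ, hg,
      ofoFun_padWith (by omega) hinj ⟨j, rfl⟩]
  obtain ⟨y, w', rfl⟩ := List.exists_cons_of_ne_nil (List.ne_nil_of_mem hx)
  rw [key x hx, ← key y List.mem_cons_self, List.erase_cons_head]

end Padding

/-- If n > |A| + 1, f is determined by the order of first occurrence, and
for all 2-subsets I, J there is a bijection π_{IJ} with π_{IJ}(min J) = min I and
f(aδ_I) = f(aπ_{IJ}δ_J) for all a, then f is totally symmetric. -/
theorem ofo_determined_piIJ_totally_symmetric {A B : Type*} [Fintype A] [DecidableEq A]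
    {n : ℕ} (hn : Fintype.card A + 1 < n + 1)
    (f : (Fin (n + 1) → A) → B)
    (hofo : ∃ fstar : List A → B, ∀ b : Fin (n + 1) → A, f b = fstar (ofoFun b))
    (hpi : ∀ (i j : Fin (n + 1)) (hij : i < j) (k l : Fin (n + 1)) (hkl : k < l),
      ∃ π : Equiv.Perm (Fin n),
        π (delta k l hkl k) = delta i j hij i ∧
        ∀ a : Fin n → A, f (a ∘ delta i j hij) = f ((a ∘ π) ∘ delta k l hkl)) :
    ∀ (σ : Equiv.Perm (Fin (n + 1))) (a : Fin (n + 1) → A), f (a ∘ σ) = f a := by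
  obtain ⟨fstar, hfstar⟩ := hofo
  obtain ⟨k, rfl⟩ : ∃ k, n = k + 1 := ⟨n - 1, by omega⟩
  have h01 : (0 : Fin (k + 2)) < 1 := Fin.zero_lt_one
  obtain ⟨π, hπ0, hπ⟩ := hpi _ _ (Fin.castSucc_lt_last (Fin.last k)) 0 1 h01
  have hπlast : π 0 = Fin.last k := by
    rw [show delta 0 1 h01 0 = 0 from Fin.ext (delta_val_of_lt h01 h01)] at hπ0
    exact hπ0.trans (Fin.ext (delta_val_of_lt _ (Fin.castSucc_lt_last _)))
  have hinv : ∀ c : Fin (k + 1) → A, fstar (ofoFun (c ∘ π)) = fstar (ofoFun c) := fun c => by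
    simpa [hfstar, ofoFun_comp_delta_last, ofoFun_comp_delta_zero_one] using (hπ c).symm
  intro σ a
  rw [hfstar, hfstar]
  refine (ofoFun_comp_perm σ a).eq_of_forall_cons_erase_eq (fun w hw x hx => ?_) (nodup_ofo _)
  exact cons_erase_eq_of_ofoFun_comp_eq π hπlast hinv hw (by have := hw.length_le_card; omega) hx
end

section
/- Let |A| = k ≥ 2, |B| ≥ 2, n = k+1. There exists a function f : A^n → B all of whose identification minors f_I are equivalent to a common function determined by the order of first occurrence (hence f has a unique identification minor), but f itself is not equivalent to any n-ary function determined by the order of first occurrence; moreover if k > 2 then the invariance group of f is trivial, so f is not 2-set-transitive. -/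
/-!
The witness takes a value `α` exactly on the tuples `d_{ij} = e⁻¹ ∘ cycleRange i ∘ δ_{ij}`
(`i < j`) and a value `β ≠ α` elsewhere. The only coincidence of `d_{ij}` is at the positions
`i, j`, where it takes the value `e⁻¹ 0`, and `e ∘ d_{ij}` is strictly increasing off `{i, j}`.

* A minor `a ∘ δ_{ij}` has a coincidence at `i, j`, so it is some `d_{i'j'}` only if it is
  `d_{ij}`, i.e. iff `a ∘ (cycleRange i)⁻¹ = e⁻¹`; as `e⁻¹` is injective, this is the condition
  `ofo (a ∘ (cycleRange i)⁻¹) = [e⁻¹ 0, …, e⁻¹ (k-1)]`.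
* The witness is not `ofo`-determined because `ofo` forgets which value is repeated, while in
  every `d_{ij}` the repeated value is `e⁻¹ 0`.
* An invariant permutation `σ` maps each `d_{ij}` to some `d_{i'j'}`; monotonicity off the
  pairs forces `σ x < σ y` whenever `x < y` and `σ x, σ y` avoid some pair `{i, j}`, which is
  always possible once `k + 1 ≥ 4`. So `σ` is strictly monotone, hence the identity.
-/

open Function

lemma Fin.cycleRange_strictMonoOn {n : ℕ} (i : Fin n) :
    StrictMonoOn (Fin.cycleRange i) {i}ᶜ := by
  intro u hu v hv huv
  rcases lt_or_gt_of_ne hu with hu | hu <;> rcases lt_or_gt_of_ne hv with hv | hv <;>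
    simp only [Fin.lt_def, Fin.coe_cycleRange_of_lt, Fin.cycleRange_of_gt, *] at huv hu hv ⊢ <;>
    omega

namespace IdentificationMinor

section Ofo

variable {A : Type*} [DecidableEq A]

lemma ofo_sublist (l : List A) : (ofo l).Sublist l := by
  simpa [ofo] using (List.dedup_sublist l.reverse).reverse

lemma mem_ofo {x : A} {l : List A} : x ∈ ofo l ↔ x ∈ l := by
  simp [ofo]

lemma nodup_ofo (l : List A) : (ofo l).Nodup :=
  List.nodup_reverse.mpr (List.nodup_dedup _)

lemma ofo_eq_self {l : List A} (h : l.Nodup) : ofo l = l := by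
  rw [ofo, List.dedup_eq_self.mpr (List.nodup_reverse.mpr h), List.reverse_reverse]

lemma ofo_append_singleton_of_mem {x : A} {l : List A} (h : x ∈ l) :
    ofo (l ++ [x]) = ofo l := by
  simp [ofo, List.dedup_cons_of_mem (List.mem_reverse.mpr h)]

lemma ofoFun_eq_ofFn_iff {n : ℕ} {c g : Fin n → A} (hg : Injective g) :
    ofoFun c = List.ofFn g ↔ c = g := by
  refine ⟨fun h => List.ofFn_injective ?_,
    fun h => by subst h; exact ofo_eq_self (List.nodup_ofFn.mpr hg)⟩
  have hlen := congrArg List.length h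
  simp only [ofoFun, List.length_ofFn] at hlen
  rw [← h, ofoFun, (ofo_sublist _).eq_of_length (by simpa using hlen)]

end Ofo

lemma exists_ofFn_eq {A : Type*} {n : ℕ} {l : List A} (h : l.length = n) :
    ∃ c : Fin n → A, List.ofFn c = l := by
  subst h
  exact ⟨_, List.ofFn_getElem⟩

lemma exists_ne_of_ofFn_eq_append {A : Type*} {n : ℕ} {c : Fin (n + 1) → A} {l : List A}
    {x : A} (hc : List.ofFn c = l ++ [x]) (hx : x ∈ l) :
    ∃ t t', t ≠ t' ∧ c t = x ∧ c t' = x := by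
  obtain ⟨m, hm, rfl⟩ := List.getElem_of_mem hx
  have hl : l.length = n := by simpa using (congrArg List.length hc).symm
  have hget (t : Fin (n + 1)) : c t = (l ++ [l[m]])[(t : ℕ)]'(by simp; omega) := by
    simp only [← hc, List.getElem_ofFn]
  refine ⟨⟨m, by omega⟩, Fin.last n, Fin.ne_of_lt (by simp [Fin.lt_def]; omega), ?_, ?_⟩
  · rw [hget, List.getElem_append_left]
  · rw [hget, List.getElem_append_right (by simp [hl])]
    simp [hl]

lemma exists_lt_and_not_mem_pair {n : ℕ} (hn : 4 ≤ n) (x y : Fin n) :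
    ∃ i j, i < j ∧ x ∉ ({i, j} : Set (Fin n)) ∧ y ∉ ({i, j} : Set (Fin n)) := by
  have hcard : 1 < (Finset.univ \ {x, y}).card := by
    have := Finset.card_le_two (a := x) (b := y)
    rw [Finset.card_sdiff_of_subset (Finset.subset_univ _), Finset.card_univ, Fintype.card_fin]
    omega
  obtain ⟨i, hi, j, hj, hij⟩ := Finset.one_lt_card.mp hcard
  simp only [Finset.mem_sdiff, Finset.mem_univ, Finset.mem_insert, Finset.mem_singleton,
    true_and, not_or] at hi hj
  rcases hij.lt_or_gt with hlt | hlt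
  · exact ⟨i, j, hlt, by grind, by grind⟩
  · exact ⟨j, i, hlt, by grind, by grind⟩

lemma eq_and_eq_of_mem_pair {α : Type*} [LinearOrder α] {i j i' j' : α} (h : i < j)
    (h' : i' < j') (hi : i = i' ∨ i = j') (hj : j = i' ∨ j = j') : i = i' ∧ j = j' := by
  rcases hi with rfl | rfl <;> rcases hj with rfl | rfl <;> simp_all [lt_asymm]

section Delta

variable {n : ℕ} {i j : Fin (n + 1)} (hij : i < j)

lemma coe_delta (t : Fin (n + 1)) :
    (delta i j hij t : ℕ) =
      if (t : ℕ) < j then (t : ℕ) else if t = j then (i : ℕ) else t - 1 := by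
  unfold delta
  split_ifs <;> simp_all [Fin.ext_iff]

lemma delta_surjective : Surjective (delta i j hij) := by
  intro u
  by_cases hu : (u : ℕ) < j
  · exact ⟨⟨u, by omega⟩, Fin.ext (by simp [coe_delta, hu])⟩
  · refine ⟨⟨u + 1, by omega⟩, Fin.ext ?_⟩
    rw [coe_delta, if_neg (by simp; omega), if_neg (by simp [Fin.ext_iff]; omega)]
    simp

lemma delta_eq_castPred_iff {t : Fin (n + 1)} :
    delta i j hij t = i.castPred (Fin.ne_last_of_lt hij) ↔ t = i ∨ t = j := by
  have := Fin.lt_def.mp hij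
  simp only [Fin.ext_iff, coe_delta, Fin.coe_castPred]
  split_ifs <;> omega

lemma delta_strictMonoOn : StrictMonoOn (delta i j hij) {j}ᶜ := by
  intro t ht t' ht' htt'
  simp only [Set.mem_compl_iff, Set.mem_singleton_iff, Fin.ext_iff] at ht ht'
  simp only [Fin.lt_def, coe_delta] at htt' ⊢
  split_ifs <;> omega

end Delta

section Pattern

variable {k : ℕ}

def pattern (i j : Fin (k + 1)) (hij : i < j) : Fin (k + 1) → Fin k :=
  Fin.cycleRange (i.castPred (Fin.ne_last_of_lt hij)) ∘ delta i j hij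

variable {i j : Fin (k + 1)} (hij : i < j)

lemma pattern_surjective : Surjective (pattern i j hij) :=
  (Fin.cycleRange _).surjective.comp (delta_surjective hij)

lemma pattern_eq_zero_iff [NeZero k] {t : Fin (k + 1)} :
    pattern i j hij t = 0 ↔ t = i ∨ t = j := by
  rw [pattern, comp_apply, ← Fin.cycleRange_self (i.castPred (Fin.ne_last_of_lt hij)),
    (Fin.cycleRange _).injective.eq_iff, delta_eq_castPred_iff]

lemma pattern_strictMonoOn : StrictMonoOn (pattern i j hij) {i, j}ᶜ := by
  refine (Fin.cycleRange_strictMonoOn _).comp ((delta_strictMonoOn hij).mono ?_) ?_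
  · exact Set.compl_subset_compl.mpr (by simp)
  · intro t ht
    simp only [Set.mem_compl_iff, Set.mem_insert_iff, Set.mem_singleton_iff] at ht ⊢
    rwa [delta_eq_castPred_iff]

lemma mem_pair_of_pattern_eq [NeZero k] {t t' : Fin (k + 1)}
    (h : pattern i j hij t = pattern i j hij t') (hne : t ≠ t') :
    (t = i ∨ t = j) ∧ (t' = i ∨ t' = j) := by
  by_cases ht : t = i ∨ t = j
  · exact ⟨ht, (pattern_eq_zero_iff hij).mp (h ▸ (pattern_eq_zero_iff hij).mpr ht)⟩
  by_cases ht' : t' = i ∨ t' = j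
  · exact absurd ((pattern_eq_zero_iff hij).mp (h.trans ((pattern_eq_zero_iff hij).mpr ht'))) ht
  exact absurd ((pattern_strictMonoOn hij).injOn (by simpa using ht) (by simpa using ht') h) hne

end Pattern

section Witness

variable {A B : Type*} {k : ℕ}

def witnessSupport (e : A ≃ Fin k) : Set (Fin (k + 1) → A) :=
  {b | ∃ i j hij, b = e.symm ∘ pattern i j hij}

open Classical in
noncomputable def witness (e : A ≃ Fin k) (α β : B) (b : Fin (k + 1) → A) : B :=
  if b ∈ witnessSupport e then α else β

def witnessStar [DecidableEq A] (e : A ≃ Fin k) (α β : B) (l : List A) : B :=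
  if l = List.ofFn e.symm then α else β

variable (e : A ≃ Fin k) {α β : B}

lemma witness_of_mem {b : Fin (k + 1) → A} (hb : b ∈ witnessSupport e) : witness e α β b = α :=
  if_pos hb

lemma mem_witnessSupport_of_witness_eq (hαβ : α ≠ β) {b : Fin (k + 1) → A}
    (hb : witness e α β b = α) : b ∈ witnessSupport e := by
  by_contra h
  exact hαβ (hb.symm.trans (if_neg h))

variable [NeZero k]

lemma comp_delta_mem_witnessSupport_iff {i j : Fin (k + 1)} (hij : i < j) (a : Fin k → A) :
    a ∘ delta i j hij ∈ witnessSupport e ↔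
      a = e.symm ∘ Fin.cycleRange (i.castPred (Fin.ne_last_of_lt hij)) := by
  refine ⟨?_, fun h => ⟨i, j, hij, by rw [h]; rfl⟩⟩
  rintro ⟨i', j', hij', h⟩
  have hcoll : pattern i' j' hij' i = pattern i' j' hij' j := by
    have hδ : delta i j hij i = delta i j hij j :=
      ((delta_eq_castPred_iff hij).mpr (.inl rfl)).trans
        ((delta_eq_castPred_iff hij).mpr (.inr rfl)).symm
    apply e.symm.injective
    calc e.symm (pattern i' j' hij' i) = a (delta i j hij i) := (congrFun h i).symm
      _ = a (delta i j hij j) := by rw [hδ]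
      _ = e.symm (pattern i' j' hij' j) := congrFun h j
  obtain ⟨rfl, rfl⟩ := eq_and_eq_of_mem_pair hij hij'
    (mem_pair_of_pattern_eq hij' hcoll hij.ne).1 (mem_pair_of_pattern_eq hij' hcoll hij.ne).2
  exact (delta_surjective hij).injective_comp_right h

lemma witness_comp_delta [DecidableEq A] {i j : Fin (k + 1)} (hij : i < j) (a : Fin k → A) :
    witness e α β (a ∘ delta i j hij) = witnessStar e α β
      (ofoFun (a ∘ (Fin.cycleRange (i.castPred (Fin.ne_last_of_lt hij))).symm)) := by
  simp only [witness, witnessStar, comp_delta_mem_witnessSupport_iff,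
    ofoFun_eq_ofFn_iff e.symm.injective, Equiv.comp_symm_eq]

lemma exists_ofoFun_eq_of_mem_of_not_mem [Fintype A] [DecidableEq A] (hk : 1 < k)
    (σ : Equiv.Perm (Fin (k + 1))) :
    ∃ b b', ofoFun (b ∘ σ) = ofoFun (b' ∘ σ) ∧
      b ∈ witnessSupport e ∧ b' ∉ witnessSupport e := by
  set d := e.symm ∘ pattern (Fin.castSucc 0) (Fin.last k) (Fin.castSucc_lt_last 0)
  set L := ofoFun (d ∘ σ)
  have hmem (x : A) : x ∈ L := mem_ofo.mpr <| List.mem_ofFn.mpr <|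
    ((e.symm.surjective.comp (pattern_surjective _)).comp σ.surjective) x
  have hL : L.Nodup := nodup_ofo _
  have hlen : L.length = k := by
    rw [← List.toFinset_card_of_nodup hL,
      Finset.eq_univ_of_forall (fun x => List.mem_toFinset.mpr (hmem x)), Finset.card_univ,
      Fintype.card_congr e, Fintype.card_fin]
  set v := e.symm ⟨1, hk⟩
  obtain ⟨c, hc⟩ := exists_ofFn_eq (l := L ++ [v]) (n := k + 1) (by simp [hlen])
  have hcL : ofoFun c = L := by
    rw [ofoFun, hc, ofo_append_singleton_of_mem (hmem v), ofo_eq_self hL]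
  refine ⟨d, c ∘ σ.symm, ?_, ⟨_, _, _, rfl⟩, ?_⟩
  · rw [show (c ∘ σ.symm) ∘ σ = c by ext; simp, hcL]
  rintro ⟨i, j, hij, h⟩
  have hp (s : Fin (k + 1)) (hs : c s = v) : pattern i j hij (σ s) = ⟨1, hk⟩ := by
    have := congrFun h (σ s)
    simp only [comp_apply, Equiv.symm_apply_apply, hs] at this
    exact e.symm.injective this.symm
  obtain ⟨t, t', hne, ht, ht'⟩ := exists_ne_of_ofFn_eq_append hc (hmem v)
  have h0 := (pattern_eq_zero_iff hij).mpr
    (mem_pair_of_pattern_eq hij ((hp t ht).trans (hp t' ht').symm) (σ.injective.ne hne)).1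
  rw [hp t ht] at h0
  exact absurd (congrArg Fin.val h0) (by simp)

lemma not_exists_witness_eq_comp_ofoFun [Fintype A] [DecidableEq A] (hαβ : α ≠ β)
    (hk : 1 < k) :
    ¬ ∃ (fstar : List A → B) (σ : Equiv.Perm (Fin (k + 1))),
      ∀ b, witness e α β b = fstar (ofoFun (b ∘ σ)) := by
  rintro ⟨fstar, σ, hf⟩
  obtain ⟨b, b', hbb', hb, hb'⟩ := exists_ofoFun_eq_of_mem_of_not_mem e hk σ
  exact hb' (mem_witnessSupport_of_witness_eq e hαβ <|
    (hf b').trans (hbb' ▸ (hf b).symm.trans (witness_of_mem e hb)))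

lemma lt_of_comp_mem_witnessSupport {σ : Equiv.Perm (Fin (k + 1))} {i j : Fin (k + 1)}
    (hij : i < j) (hσ : e.symm ∘ pattern i j hij ∘ σ ∈ witnessSupport e) {x y : Fin (k + 1)}
    (hx : σ x ∉ ({i, j} : Set (Fin (k + 1)))) (hy : σ y ∉ ({i, j} : Set (Fin (k + 1))))
    (hxy : x < y) : σ x < σ y := by
  obtain ⟨i', j', hij', h⟩ := hσ
  have hp : pattern i j hij ∘ σ = pattern i' j' hij' := e.symm.injective.comp_left h
  have hcompl (z : Fin (k + 1)) (hz : σ z ∉ ({i, j} : Set (Fin (k + 1)))) :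
      z ∉ ({i', j'} : Set (Fin (k + 1))) := by
    rwa [Set.mem_insert_iff, Set.mem_singleton_iff, ← pattern_eq_zero_iff hij', ← hp,
      comp_apply, pattern_eq_zero_iff hij]
  have := ((pattern_strictMonoOn hij').lt_iff_lt (hcompl x hx) (hcompl y hy)).mpr hxy
  rw [← hp] at this
  exact ((pattern_strictMonoOn hij).lt_iff_lt hx hy).mp this

lemma eq_one_of_witness_comp_eq (hαβ : α ≠ β) (hk : 2 < k) {σ : Equiv.Perm (Fin (k + 1))}
    (hσ : ∀ b, witness e α β (b ∘ σ) = witness e α β b) : σ = 1 := by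
  have hmono : StrictMono σ := by
    intro x y hxy
    obtain ⟨i, j, hij, hx, hy⟩ := exists_lt_and_not_mem_pair (by omega) (σ x) (σ y)
    have hmem : e.symm ∘ pattern i j hij ∘ σ ∈ witnessSupport e :=
      mem_witnessSupport_of_witness_eq e hαβ <|
        (hσ _).trans (witness_of_mem e ⟨i, j, hij, rfl⟩)
    exact lt_of_comp_mem_witnessSupport e hij hmem hx hy hxy
  exact Equiv.ext (congrFun hmono.eq_id)

end Witness

end IdentificationMinor

/-- for |A| = k ≥ 2 and |B| ≥ 2, there is a function f : A^{k+1} → B all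
of whose identification minors are equivalent to one common function determined by the
order of first occurrence, while f itself is not equivalent to any function determined
by the order of first occurrence; if k > 2 then the invariance group of f is trivial. -/
theorem exists_uim_not_ofo_not_2st {A B : Type*} [Fintype A] [DecidableEq A] {k : ℕ}
    (hk : 2 ≤ k) (hcard : Fintype.card A = k)
    (hB : ∃ x y : B, x ≠ y) :
    ∃ f : (Fin (k + 1) → A) → B,
      (∃ fstar : List A → B, ∀ (i j : Fin (k + 1)) (hij : i < j),
        ∃ σ : Equiv.Perm (Fin k), ∀ a : Fin k → A,
          f (a ∘ delta i j hij) = fstar (ofoFun (a ∘ σ))) ∧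
      (¬ ∃ (fstar : List A → B) (σ : Equiv.Perm (Fin (k + 1))),
        ∀ b : Fin (k + 1) → A, f b = fstar (ofoFun (b ∘ σ))) ∧
      (2 < k → ∀ σ : Equiv.Perm (Fin (k + 1)),
        (∀ b : Fin (k + 1) → A, f (b ∘ σ) = f b) → σ = 1) := by
  open IdentificationMinor in
  obtain ⟨α, β, hαβ⟩ := hB
  have : NeZero k := ⟨by omega⟩
  let e : A ≃ Fin k := Fintype.equivFinOfCardEq hcard
  exact ⟨witness e α β,
    ⟨witnessStar e α β, fun i j hij => ⟨_, witness_comp_delta e hij⟩⟩,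
    not_exists_witness_eq_comp_ofoFun e hαβ (by omega),
    fun hk3 _ hσ => eq_one_of_witness_comp_eq e hαβ hk3 hσ⟩
end

section
/- Identify A with {1,...,k}, k ≥ 2, n = k+1, and for each two-element subset I of {1,...,n} let d_I = (kρ_I)δ_I where k denotes the tuple (1,2,...,k), ρ_I is the cyclic shift sending position t to t + min I (mod k), and δ_I inserts a copy of the (min I)-th entry at position max I. Then in each d_I the only element of A occurring more than once is 1, and its two occurrences are exactly at the positions indexed by I. -/
/-- The tuple d_I = (kρ_I)δ_I of the paper (0-indexed, with A identified with Fin k):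
the underlying k-tuple has entry t - min I at position t (cyclic shift, so that the
entry at position min I is the element 0, the paper's element 1), and δ_I duplicates
that entry at position max I. -/
def dtuple {k : ℕ} (i j : Fin (k + 1)) (hij : i < j) : Fin (k + 1) → Fin k :=
  (fun t : Fin k =>
      t - ⟨(i : ℕ), lt_of_lt_of_le (Fin.lt_def.mp hij) (Nat.lt_succ_iff.mp j.isLt)⟩) ∘
    delta i j hij

section

variable {n : ℕ} {i j : Fin (n + 1)} (hij : i < j)

theorem val_delta (t : Fin (n + 1)) :
    (delta i j hij t : ℕ) =
      if (t : ℕ) < j then (t : ℕ) else if (t : ℕ) = j then (i : ℕ) else (t : ℕ) - 1 := by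
  unfold delta
  split_ifs <;> rfl

theorem delta_left_eq_right : delta i j hij i = delta i j hij j := by
  have : (i : ℕ) < j := hij
  ext
  simp [val_delta, this]

theorem delta_eq_delta_of_ne {s t : Fin (n + 1)} (hst : s ≠ t)
    (h : delta i j hij s = delta i j hij t) : (s = i ∧ t = j) ∨ (s = j ∧ t = i) := by
  have hij' : (i : ℕ) < j := hij
  have hval := congrArg Fin.val h
  rw [val_delta, val_delta] at hval
  rw [Ne, Fin.ext_iff] at hst
  simp only [Fin.ext_iff]
  split_ifs at hval <;> omega

theorem dtuple_eq_dtuple_iff {s t : Fin (n + 1)} :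
    dtuple i j hij s = dtuple i j hij t ↔ delta i j hij s = delta i j hij t := by
  have : NeZero n := ⟨by omega⟩
  exact sub_left_inj

theorem val_dtuple_left : (dtuple i j hij i : ℕ) = 0 := by
  have : (i : ℕ) < j := hij
  have hin : (i : ℕ) ≤ n := by omega
  simp [dtuple, val_delta, this, Fin.sub_def, Nat.sub_add_cancel hin]

end

/-- in d_I the only element of A occurring more than once is the paper's
element 1 (here 0 : Fin k), and its two occurrences are exactly at the positions
indexed by I. -/
theorem dtuple_repeated_entry {k : ℕ} (hk : 2 ≤ k) (i j : Fin (k + 1)) (hij : i < j) :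
    (dtuple i j hij i = ⟨0, by omega⟩ ∧ dtuple i j hij j = ⟨0, by omega⟩) ∧
    (∀ s t : Fin (k + 1), s ≠ t → dtuple i j hij s = dtuple i j hij t →
      dtuple i j hij s = ⟨0, by omega⟩ ∧ ((s = i ∧ t = j) ∨ (s = j ∧ t = i))) := by
  have h_left : dtuple i j hij i = ⟨0, by omega⟩ := Fin.ext (val_dtuple_left hij)
  have h_right : dtuple i j hij j = ⟨0, by omega⟩ :=
    ((dtuple_eq_dtuple_iff hij).2 (delta_left_eq_right hij)).symm.trans h_left
  refine ⟨⟨h_left, h_right⟩, fun s t hst h => ?_⟩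
  rcases delta_eq_delta_of_ne hij hst ((dtuple_eq_dtuple_iff hij).1 h) with
    ⟨rfl, rfl⟩ | ⟨rfl, rfl⟩
  · exact ⟨h_left, Or.inl ⟨rfl, rfl⟩⟩
  · exact ⟨h_right, Or.inr ⟨rfl, rfl⟩⟩
end

section
/- Let α ≠ β in B, A = {1,...,k} with k > 2, n = k+1, and let f : A^n → B take value α exactly on the set {d_I : I a 2-subset of {1,...,n}} and β elsewhere, where d_I = (i, i+1,...,k,1,...,i−1) with i = min I and with a second copy of i inserted at position max I. If σ ∈ S_n satisfies f = f ∘ σ-permutation, then σ is the identity; i.e., Inv f = {id}. -/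
/-!
Invariance of `f` means that `b ↦ b ∘ σ` maps the family of tuples `d_I` into itself. The zero
entries of `d_I` sit exactly at the positions in `I`, so `d_I ∘ σ = d_{σ⁻¹ I}`, that is
`d_{σ I} (σ t) = d_I t` for every pair `I` and position `t`.

Positions are `0, …, k` and values live in `Fin k`. Put `w₀ = σ⁻¹ 0` and `w₁ = σ⁻¹ k`. For
`I = {w₀, x}` and `t = w₁` the relation reads `d_{w₀, x} w₁ = d_{0, σ x} k = k - 1` for every
`x ∉ {w₀, w₁}`, and this pins `(w₀, w₁)` down to `(0, k)` or `(1, 0)`. For `I = {w₀, w₁}` it says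
that `σ` agrees with `d_{w₀, w₁}` away from `w₀, w₁`: in the first case `σ` is the identity, in
the second it is the cyclic shift `t ↦ t - 1`, which violates the relation for `I = {0, 2}`,
`t = 1`.
-/

/-- The entry at position `t` of `dtuple` for the unordered pair `{a, b}`, computed in `ℕ`
(see `dtuple_val`). -/
def dtupleNat (k a b t : ℕ) : ℕ :=
  if t = max a b then 0
  else if t < min a b then t + k - min a b
  else if t < max a b then t - min a b
  else t - 1 - min a b

lemma dtupleNat_comm (k a b t : ℕ) : dtupleNat k a b t = dtupleNat k b a t := by
  simp only [dtupleNat, min_comm, max_comm]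

lemma dtupleNat_cases (k a b t : ℕ) (ha : a ≤ k) :
    (a ≤ b ∧ ((t = b ∧ dtupleNat k a b t = 0) ∨ (t < a ∧ dtupleNat k a b t + a = t + k) ∨
      (a ≤ t ∧ t < b ∧ dtupleNat k a b t + a = t) ∨ (b < t ∧ dtupleNat k a b t + a + 1 = t))) ∨
    (b < a ∧ ((t = a ∧ dtupleNat k a b t = 0) ∨ (t < b ∧ dtupleNat k a b t + b = t + k) ∨
      (b ≤ t ∧ t < a ∧ dtupleNat k a b t + b = t) ∨ (a < t ∧ dtupleNat k a b t + b + 1 = t))) := by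
  unfold dtupleNat
  rcases le_or_gt a b with h | h
  · simp only [min_eq_left h, max_eq_right h]
    split_ifs <;> omega
  · simp only [min_eq_right h.le, max_eq_left h.le]
    split_ifs <;> omega

lemma dtupleNat_eq_zero_iff {k a b t : ℕ} (hab : a ≠ b) (ha : a ≤ k) (hb : b ≤ k) :
    dtupleNat k a b t = 0 ↔ t = a ∨ t = b := by
  unfold dtupleNat
  split_ifs <;> omega

lemma dtupleNat_zero_last {k t : ℕ} (ht : t < k) : dtupleNat k 0 k t = t := by
  simp [dtupleNat, ht.ne, ht]

lemma dtupleNat_zero_left_last {k x : ℕ} (hx : x < k) : dtupleNat k 0 x k = k - 1 := by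
  simp [dtupleNat, hx.ne', hx.not_gt]

lemma dtuple_val {k : ℕ} (i j : Fin (k + 1)) (hij : i < j) (t : Fin (k + 1)) :
    (dtuple i j hij t : ℕ) = dtupleNat k i j t := by
  have hij' : (i : ℕ) < j := hij
  have hj := j.isLt
  have hsub : ∀ (r : Fin k) (hi : (i : ℕ) < k), ((r - ⟨(i : ℕ), hi⟩ : Fin k) : ℕ) =
      if (i : ℕ) ≤ r then (r : ℕ) - i else (r : ℕ) + k - i := fun r hi => by
    split_ifs with h
    · exact Fin.coe_sub_iff_le.mpr h
    · rw [Fin.coe_sub_iff_lt.mpr (show r < ⟨(i : ℕ), hi⟩ from Nat.lt_of_not_le h)]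
      dsimp only
      omega
  simp only [dtuple, delta, Function.comp_apply]
  split_ifs <;> simp only [hsub, dtupleNat, min_eq_left hij'.le, max_eq_right hij'.le] <;>
    split_ifs <;> omega

lemma dtupleNat_perm_apply {k : ℕ} {σ : Equiv.Perm (Fin (k + 1))}
    (hσ : ∀ (i j : Fin (k + 1)) (hij : i < j), ∃ (p q : Fin (k + 1)) (hpq : p < q),
      dtuple i j hij ∘ σ = dtuple p q hpq)
    {a b : Fin (k + 1)} (hab : a ≠ b) (t : Fin (k + 1)) :
    dtupleNat k (σ a) (σ b) (σ t) = dtupleNat k a b t := by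
  wlog hlt : σ a < σ b generalizing a b
  · rw [dtupleNat_comm, this hab.symm (lt_of_le_of_ne (not_lt.mp hlt) (σ.injective.ne hab.symm)),
      dtupleNat_comm]
  obtain ⟨p, q, hpq, heq⟩ := hσ _ _ hlt
  have hval : ∀ s, dtupleNat k (σ a) (σ b) (σ s) = dtupleNat k p q s := fun s => by
    rw [← dtuple_val _ _ hlt, ← dtuple_val _ _ hpq, ← heq, Function.comp_apply]
  have mem : ∀ s : Fin (k + 1), (s : ℕ) = p ∨ (s : ℕ) = q → s = a ∨ s = b := fun s hs => by
    have hs₀ : dtupleNat k (σ a) (σ b) (σ s) = 0 := by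
      rw [hval, dtupleNat_eq_zero_iff (Fin.val_ne_of_ne hpq.ne) (by omega) (by omega)]
      exact hs
    rw [dtupleNat_eq_zero_iff (Fin.val_ne_of_ne hlt.ne) (by omega) (by omega), ← Fin.ext_iff,
      ← Fin.ext_iff] at hs₀
    exact hs₀.imp (fun h => σ.injective h) (fun h => σ.injective h)
  rw [hval]
  rcases mem p (.inl rfl) with rfl | rfl <;> rcases mem q (.inr rfl) with rfl | rfl
  · exact absurd hpq (lt_irrefl _)
  · rfl
  · exact dtupleNat_comm _ _ _ _
  · exact absurd hpq (lt_irrefl _)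

lemma eq_zero_last_or_eq_one_zero_of_forall_dtupleNat {k w₀ w₁ : ℕ} (hk : 2 < k) (h₀ : w₀ ≤ k)
    (h₁ : w₁ ≤ k)
    (h : ∀ x ≤ k, x ≠ w₀ → x ≠ w₁ → dtupleNat k w₀ x w₁ = k - 1) :
    (w₀ = 0 ∧ w₁ = k) ∨ (w₀ = 1 ∧ w₁ = 0) := by
  rcases h₁.eq_or_lt with hw₁ | hw₁
  · have := h 1 (by omega)
    have := h 2 (by omega)
    have := dtupleNat_cases k w₀ 1 w₁ h₀
    have := dtupleNat_cases k w₀ 2 w₁ h₀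
    omega
  · have := h 0 (by omega)
    have := h 1 (by omega)
    have := h 2 (by omega)
    have := h k le_rfl
    have := dtupleNat_cases k w₀ 0 w₁ h₀
    have := dtupleNat_cases k w₀ 1 w₁ h₀
    have := dtupleNat_cases k w₀ 2 w₁ h₀
    have := dtupleNat_cases k w₀ k w₁ h₀
    omega

lemma eq_one_of_dtupleNat_perm_apply {k : ℕ} (hk : 2 < k) (σ : Equiv.Perm (Fin (k + 1)))
    (h : ∀ a b t, a ≠ b → dtupleNat k (σ a) (σ b) (σ t) = dtupleNat k a b t) : σ = 1 := by
  set w₀ := σ.symm 0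
  set w₁ := σ.symm (Fin.last k)
  have hσw₀ : (σ w₀ : ℕ) = 0 := by simp [w₀]
  have hσw₁ : (σ w₁ : ℕ) = k := by simp [w₁]
  have hw : w₀ ≠ w₁ := fun e => by rw [e, hσw₁] at hσw₀; omega
  have hmid : ∀ x, x ≠ w₀ → x ≠ w₁ → 0 < (σ x : ℕ) ∧ (σ x : ℕ) < k := fun x h₀ h₁ =>
    ⟨Nat.pos_of_ne_zero fun e => h₀ (σ.symm_apply_eq.mpr (Fin.ext e).symm).symm,
      Fin.val_lt_last fun e => h₁ (σ.symm_apply_eq.mpr e.symm).symm⟩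
  have hshift : ∀ t, t ≠ w₀ → t ≠ w₁ → (σ t : ℕ) = dtupleNat k w₀ w₁ t := fun t h₀ h₁ => by
    rw [← h w₀ w₁ t hw, hσw₀, hσw₁, dtupleNat_zero_last (hmid t h₀ h₁).2]
  have hpair := eq_zero_last_or_eq_one_zero_of_forall_dtupleNat hk (Nat.le_of_lt_succ w₀.isLt)
    (Nat.le_of_lt_succ w₁.isLt) fun x hx hxw₀ hxw₁ => by
      have hx₀ : (⟨x, by omega⟩ : Fin (k + 1)) ≠ w₀ := fun e => hxw₀ (congrArg Fin.val e)
      have hx₁ : (⟨x, by omega⟩ : Fin (k + 1)) ≠ w₁ := fun e => hxw₁ (congrArg Fin.val e)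
      rw [← h w₀ _ w₁ hx₀.symm, hσw₀, hσw₁, dtupleNat_zero_left_last (hmid _ hx₀ hx₁).2]
  rcases hpair with ⟨h₀, h₁⟩ | ⟨h₀, h₁⟩
  · ext t
    rw [Equiv.Perm.one_apply]
    by_cases ht₀ : t = w₀
    · rw [ht₀, hσw₀, h₀]
    by_cases ht₁ : t = w₁
    · rw [ht₁, hσw₁, h₁]
    rw [hshift t ht₀ ht₁, h₀, h₁, dtupleNat_zero_last]
    exact lt_of_le_of_ne (Nat.le_of_lt_succ t.isLt) fun e => ht₁ (Fin.ext (e.trans h₁.symm))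
  · obtain ⟨z, hz⟩ : ∃ z : Fin (k + 1), (z : ℕ) = 2 := ⟨⟨2, by omega⟩, rfl⟩
    have hz₀ : z ≠ w₀ := fun e => by rw [e, h₀] at hz; omega
    have hz₁ : z ≠ w₁ := fun e => by rw [e, h₁] at hz; omega
    have hprobe := h w₁ z w₀ hz₁.symm
    rw [hσw₀, hσw₁, hshift z hz₀ hz₁, h₀, h₁, hz] at hprobe
    simp only [dtupleNat] at hprobe
    split_ifs at hprobe <;> omega

/-- for k > 2, the function f taking value α exactly on the tuples d_I
and value β ≠ α elsewhere has trivial invariance group. -/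
theorem dtuple_function_trivial_invariance {B : Type*} {k : ℕ} (hk : 2 < k)
    (α β : B) (hαβ : α ≠ β)
    (f : (Fin (k + 1) → Fin k) → B)
    (hfα : ∀ (i j : Fin (k + 1)) (hij : i < j), f (dtuple i j hij) = α)
    (hfβ : ∀ b : Fin (k + 1) → Fin k,
      (∀ (i j : Fin (k + 1)) (hij : i < j), b ≠ dtuple i j hij) → f b = β)
    (σ : Equiv.Perm (Fin (k + 1)))
    (hσ : ∀ b : Fin (k + 1) → Fin k, f (b ∘ σ) = f b) :
    σ = 1 := by
  refine eq_one_of_dtupleNat_perm_apply hk σ fun a b t hab => dtupleNat_perm_apply ?_ hab t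
  intro i j hij
  by_contra! hne
  exact hαβ ((hfα i j hij).symm.trans ((hσ _).symm.trans (hfβ _ hne)))
end

section
/- Let 2 ≤ m ≤ |A|, n = m+1. If b ∈ A^n satisfies |supp(b)| = m (i.e., b has exactly one repetition pattern realizing m distinct values), then there exist a unique a ∈ A^m and a unique two-element subset I of {1,...,n} with b = aδ_I; consequently the partial function f_{G,P,φ} : A^n_= → B defined by f_{G,P,φ}(aδ_I) = g^{φ(I)}(aρ_I) is well defined, provided g^I = g' ∘ supp on all tuples a with |supp(a)| < m. -/
/-- The 2-element subsets of Fin n. -/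
def TwoSubset (n : ℕ) := {s : Finset (Fin n) // s.card = 2}

/-!
`delta i j` (for `i < j`) is surjective, with `j.succAbove` as a section, and identifies exactly
the positions `i` and `j`. Hence a tuple `b` with `b i = b j`, `i < j`, equals
`(b ∘ j.succAbove) ∘ delta i j`; and when `a` is injective the only pair of positions identified by
`a ∘ delta i j` is `{i, j}`, which recovers `i` and `j`, and then `a` by surjectivity. So the
decomposition of `b` is unique when `|supp b| = m`, while when `|supp b| < m` every decomposition
`b = aδ_I` yields the same value `g^{φ(I)}(aρ_I) = g' (supp (aρ_I)) = g' (supp a) = g' (supp b)`.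
-/

theorem Set.ncard_range_le {α β : Type*} [Finite α] (f : α → β) :
    (Set.range f).ncard ≤ Nat.card α := by
  rw [← Set.image_univ, ← Set.ncard_univ]
  exact Set.ncard_image_le

theorem Set.ncard_range_eq_iff_injective {α β : Type*} [Finite α] {f : α → β} :
    (Set.range f).ncard = Nat.card α ↔ f.Injective := by
  rw [← Set.image_univ, ← Set.ncard_univ, Set.ncard_image_iff, Set.injOn_univ]

section Delta

variable {n : ℕ} {i j : Fin (n + 1)} (hij : i < j)

theorem Fin.val_succAbove (k : Fin n) :
    (j.succAbove k : ℕ) = if (k : ℕ) < j then (k : ℕ) else (k : ℕ) + 1 := by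
  simp only [Fin.succAbove, Fin.lt_def, Fin.val_castSucc]
  split_ifs <;> rfl

theorem delta_succAbove (k : Fin n) : delta i j hij (j.succAbove k) = k := by
  have := Fin.lt_def.mp hij
  have := k.isLt
  simp only [Fin.ext_iff, val_delta, Fin.val_succAbove]
  split_ifs <;> omega

theorem succAbove_delta (t : Fin (n + 1)) :
    j.succAbove (delta i j hij t) = if t = j then i else t := by
  have := Fin.lt_def.mp hij
  have := t.isLt
  simp only [Fin.ext_iff, val_delta, Fin.val_succAbove, apply_ite Fin.val]
  split_ifs <;> omega

theorem delta_eq_delta_iff_of_lt {s t : Fin (n + 1)} (hst : s < t) :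
    delta i j hij s = delta i j hij t ↔ s = i ∧ t = j := by
  have := Fin.lt_def.mp hij
  have := Fin.lt_def.mp hst
  simp only [Fin.ext_iff, val_delta]
  split_ifs <;> omega

theorem surjective_delta : Function.Surjective (delta i j hij) :=
  fun k => ⟨j.succAbove k, delta_succAbove hij k⟩

end Delta

section Tuples

variable {A : Type*} {m : ℕ}

theorem range_comp_delta (a : Fin m → A) {i j : Fin (m + 1)} (hij : i < j) :
    Set.range (a ∘ delta i j hij) = Set.range a :=
  (surjective_delta hij).range_comp a

theorem exists_eq_comp_delta_of_not_injective {b : Fin (m + 1) → A} (hb : ¬ b.Injective) :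
    ∃ (a : Fin m → A) (i j : Fin (m + 1)) (hij : i < j), b = a ∘ delta i j hij := by
  obtain ⟨s, t, hbst, hst⟩ := Function.not_injective_iff.mp hb
  wlog hlt : s < t generalizing s t
  · exact this t s hbst.symm (Ne.symm hst) (lt_of_le_of_ne (not_lt.mp hlt) (Ne.symm hst))
  refine ⟨b ∘ t.succAbove, s, t, hlt, funext fun u => ?_⟩
  rw [Function.comp_apply, Function.comp_apply, succAbove_delta]
  split_ifs with hu
  · rw [hu, hbst]
  · rfl

theorem eq_of_comp_delta_eq {a a' : Fin m → A} {i j i' j' : Fin (m + 1)} {hij : i < j}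
    {hij' : i' < j'} (ha : a.Injective) (h : a ∘ delta i j hij = a' ∘ delta i' j' hij') :
    a = a' ∧ i = i' ∧ j = j' := by
  have hpair : delta i j hij i' = delta i j hij j' := by
    refine ha (?_ : (a ∘ delta i j hij) i' = (a ∘ delta i j hij) j')
    rw [h, Function.comp_apply, Function.comp_apply,
      (delta_eq_delta_iff_of_lt hij' hij').mpr ⟨rfl, rfl⟩]
  obtain ⟨rfl, rfl⟩ := (delta_eq_delta_iff_of_lt hij hij').mp hpair
  exact ⟨(surjective_delta hij).injective_comp_right h, rfl, rfl⟩

end Tuples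

@[ext]
structure DeltaDecomposition (m : ℕ) (A : Type*) where
  tuple : Fin m → A
  i : Fin (m + 1)
  j : Fin (m + 1)
  lt : i < j

namespace DeltaDecomposition

variable {A B : Type*} {m : ℕ}

def toFun (d : DeltaDecomposition m A) : Fin (m + 1) → A :=
  d.tuple ∘ delta d.i d.j d.lt

def pair (d : DeltaDecomposition m A) : TwoSubset (m + 1) :=
  ⟨{d.i, d.j}, Finset.card_pair d.lt.ne⟩

theorem range_toFun (d : DeltaDecomposition m A) : Set.range d.toFun = Set.range d.tuple :=
  range_comp_delta d.tuple d.lt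

theorem eq_of_toFun_eq {d d' : DeltaDecomposition m A} (hd : d.tuple.Injective)
    (h : d.toFun = d'.toFun) : d = d' := by
  obtain ⟨ha, hi, hj⟩ := eq_of_comp_delta_eq hd h
  exact DeltaDecomposition.ext ha hi hj

theorem factorsThrough_toFun {v : DeltaDecomposition m A → B} {g' : Set A → B}
    (hv : ∀ d, (Set.range d.tuple).ncard < m → v d = g' (Set.range d.tuple)) :
    v.FactorsThrough toFun := by
  intro d d' h
  by_cases hd : (Set.range d.tuple).ncard < m
  · have hrange : Set.range d.tuple = Set.range d'.tuple := by
      rw [← range_toFun, h, range_toFun]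
    rw [hv d hd, hv d' (hrange ▸ hd), hrange]
  · have hinj : d.tuple.Injective := by
      rw [← Set.ncard_range_eq_iff_injective, Nat.card_fin]
      exact le_antisymm (by simpa using Set.ncard_range_le d.tuple) (not_lt.mp hd)
    rw [eq_of_toFun_eq hinj h]

end DeltaDecomposition

theorem small_arity_unique_decomposition_and_well_defined_general {A B : Type*} {m : ℕ}
    (hm : 2 ≤ m)
    (g' : Set A → B)
    (gI : TwoSubset (m + 1) → (Fin m → A) → B)
    (hgI : ∀ (s : TwoSubset (m + 1)) (a : Fin m → A),
      (Set.range a).ncard < m → gI s a = g' (Set.range a))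
    (P : TwoSubset (m + 1) → Equiv.Perm (Fin m))
    (φ : TwoSubset (m + 1) ≃ TwoSubset (m + 1)) :
    (∀ b : Fin (m + 1) → A, (Set.range b).ncard = m →
      (∃ (a : Fin m → A) (i j : Fin (m + 1)) (hij : i < j), b = a ∘ delta i j hij) ∧
      (∀ (a a' : Fin m → A) (i j i' j' : Fin (m + 1)) (hij : i < j) (hij' : i' < j'),
        b = a ∘ delta i j hij → b = a' ∘ delta i' j' hij' →
        a = a' ∧ i = i' ∧ j = j')) ∧
    (∃ f : (Fin (m + 1) → A) → B,
      ∀ (a : Fin m → A) (i j : Fin (m + 1)) (hij : i < j),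
        f (a ∘ delta i j hij) =
          gI (φ ⟨{i, j}, Finset.card_pair (ne_of_lt hij)⟩)
            (a ∘ (P ⟨{i, j}, Finset.card_pair (ne_of_lt hij)⟩))) := by
  refine ⟨fun b hb => ⟨exists_eq_comp_delta_of_not_injective ?_, ?_⟩, ?_⟩
  · rw [← Set.ncard_range_eq_iff_injective, hb, Nat.card_fin]
    exact m.succ_ne_self.symm
  · intro a a' i j i' j' hij hij' h h'
    refine eq_of_comp_delta_eq ?_ (h.symm.trans h')
    rw [← Set.ncard_range_eq_iff_injective, Nat.card_fin, ← range_comp_delta a hij, ← h, hb]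
  · let v (d : DeltaDecomposition m A) : B := gI (φ d.pair) (d.tuple ∘ P d.pair)
    have hv : v.FactorsThrough DeltaDecomposition.toFun :=
      DeltaDecomposition.factorsThrough_toFun fun d hd => by
        have hrange := (P d.pair).surjective.range_comp d.tuple
        exact hrange ▸ hgI _ _ (hrange ▸ hd)
    have h0 : (0 : Fin (m + 1)) < Fin.last m := by simp [Fin.lt_def]; omega
    -- The default value, taken on tuples without a repeated entry, is immaterial.
    exact ⟨Function.extend DeltaDecomposition.toFun v fun b => v ⟨b ∘ Fin.castSucc, 0, _, h0⟩,
      fun a i j hij => hv.extend_apply _ ⟨a, i, j, hij⟩⟩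

/-- for 2 ≤ m ≤ |A| and n = m+1, every b ∈ A^n with |supp(b)| = m has a
unique decomposition b = aδ_I; consequently the rule f(aδ_I) = g^{φ(I)}(aρ_I) defines a
well-defined (partial) function on the tuples with a repeated entry. -/
theorem small_arity_unique_decomposition_and_well_defined {A B : Type*}
    [Fintype A] [DecidableEq A] {m : ℕ}
    (hm : 2 ≤ m) (hmA : m ≤ Fintype.card A)
    (g' : Set A → B)
    (gI : TwoSubset (m + 1) → (Fin m → A) → B)
    (hgI : ∀ (s : TwoSubset (m + 1)) (a : Fin m → A),
      (Set.range a).ncard < m → gI s a = g' (Set.range a))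
    (P : TwoSubset (m + 1) → Equiv.Perm (Fin m))
    (φ : TwoSubset (m + 1) ≃ TwoSubset (m + 1)) :
    (∀ b : Fin (m + 1) → A, (Set.range b).ncard = m →
      (∃ (a : Fin m → A) (i j : Fin (m + 1)) (hij : i < j), b = a ∘ delta i j hij) ∧
      (∀ (a a' : Fin m → A) (i j i' j' : Fin (m + 1)) (hij : i < j) (hij' : i' < j'),
        b = a ∘ delta i j hij → b = a' ∘ delta i' j' hij' →
        a = a' ∧ i = i' ∧ j = j')) ∧
    (∃ f : (Fin (m + 1) → A) → B,
      ∀ (a : Fin m → A) (i j : Fin (m + 1)) (hij : i < j),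
        f (a ∘ delta i j hij) =
          gI (φ ⟨{i, j}, Finset.card_pair (ne_of_lt hij)⟩)
            (a ∘ (P ⟨{i, j}, Finset.card_pair (ne_of_lt hij)⟩))) :=
  small_arity_unique_decomposition_and_well_defined_general hm g' gI hgI P φ
end
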